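/- arXiv:0809.1411 — 5 statements merged into one kernel-verified Lean document; each statement's English description precedes it below -/
import Mathlib

section
/- Let A be an integral 2×2 matrix of determinant 1 whose entries, written as rows (−a,−b) and (c,d), satisfy 0 ≤ min(a,b,c,d) and max(b,c) < d. Then there exists a unique integer l ≥ 1 and a unique finite sequence (α₁,…,α_l) of integers with α_i ≥ 2 for all i such that A = M(α₁)M(α₂)⋯M(α_l). -/
/-!
Left multiplication by `M(α)` acts on `!![-a, -b; c, d]` by
`(a, b, c, d) ↦ (c, d, α c - a, α d - b)`. The conditions `b c - a d = 1`, `0 ≤ b < d`,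
`0 ≤ c < d` are preserved by this step when `α ≥ 2` and hold for the identity
(`(a, b, c, d) = (-1, 0, 0, 1)`), so they hold for every product of `M(α)`'s with `α ≥ 2`.
Conversely, the second column of such a product determines the first factor, as the unique
`α` with `0 ≤ α b - d < b` (a Hirzebruch–Jung continued fraction expansion of `d / b`);
peeling it off lowers `d`, which gives existence and uniqueness by induction. The product is
nonempty exactly when `a ≥ 0`.
-/

/-- The matrix `M(α) = !![0, -1; 1, α]`. -/
def Mmat (a : ℤ) : Matrix (Fin 2) (Fin 2) ℤ := !![0, -1; 1, a]

def Admissible (a b c d : ℤ) : Prop :=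
  b * c - a * d = 1 ∧ 0 ≤ b ∧ b < d ∧ 0 ≤ c ∧ c < d

theorem Mmat_mul_fin_two (α a b c d : ℤ) :
    Mmat α * !![-a, -b; c, d] = !![-c, -d; α * c - a, α * d - b] := by
  simp [Mmat, sub_eq_neg_add]

theorem isUnit_Mmat (α : ℤ) : IsUnit (Mmat α) := by
  rw [Matrix.isUnit_iff_isUnit_det, Mmat, Matrix.det_fin_two_of]
  simp

theorem admissible_one : Admissible (-1) 0 0 1 := by
  unfold Admissible; norm_num

theorem Admissible.Mmat_mul {a b c d α : ℤ} (h : Admissible a b c d) (hα : 2 ≤ α) :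
    Admissible c d (α * c - a) (α * d - b) := by
  obtain ⟨hdet, hb0, hbd, hc0, hcd⟩ := h
  have hac : a < c := by nlinarith
  -- `d ((d - c) - (b - a)) = (d - b) (d - c) - 1 ≥ 0`
  have hgap : b - a ≤ d - c := by nlinarith
  exact ⟨by linear_combination hdet, by omega, by nlinarith, by nlinarith, by nlinarith⟩

theorem Admissible.exists_descent {a b c d : ℤ} (h : Admissible a b c d) (hb : 0 < b) :
    ∃ α, 2 ≤ α ∧ Admissible (α * a - c) (α * b - d) a b := by
  obtain ⟨hdet, -, hbd, hc0, hcd⟩ := h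
  -- `α = ⌈d / b⌉`, so that `0 ≤ α b - d < b`
  have hdiv := Int.emod_add_mul_ediv (d - 1) b
  have hmod0 := Int.emod_nonneg (d - 1) hb.ne'
  have hmodb := Int.emod_lt_of_pos (d - 1) hb
  refine ⟨(d - 1) / b + 1, by nlinarith, by linear_combination hdet, by nlinarith, by nlinarith,
    by nlinarith, by nlinarith⟩

theorem admissible_prod_map_Mmat {L : List ℤ} (hL : ∀ x ∈ L, 2 ≤ x) :
    ∃ a b c d, Admissible a b c d ∧ (L.map Mmat).prod = !![-a, -b; c, d] := by
  induction L with
  | nil => exact ⟨-1, 0, 0, 1, admissible_one, by simp [Matrix.one_fin_two]⟩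
  | cons α T ih =>
    obtain ⟨a, b, c, d, hT, hprod⟩ := ih fun x hx => hL x (List.mem_cons_of_mem α hx)
    refine ⟨c, d, α * c - a, α * d - b, hT.Mmat_mul (hL α List.mem_cons_self), ?_⟩
    rw [List.map_cons, List.prod_cons, hprod, Mmat_mul_fin_two]

theorem Admissible.exists_prod_map_Mmat {a b c d : ℤ} (h : Admissible a b c d) :
    ∃ L : List ℤ, (∀ x ∈ L, 2 ≤ x) ∧ (L.map Mmat).prod = !![-a, -b; c, d] := by
  have ⟨hdet, hb0, hd, hc0, hcd⟩ := h
  rcases hb0.eq_or_lt with rfl | hb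
  · have hd1 : d = 1 :=
      Int.eq_one_of_mul_eq_one_left (a := -a) hd.le (by linear_combination hdet)
    obtain ⟨rfl, rfl, rfl⟩ : d = 1 ∧ a = -1 ∧ c = 0 := ⟨hd1, by subst hd1; linarith, by omega⟩
    exact ⟨[], by simp, by simp [Matrix.one_fin_two]⟩
  · obtain ⟨α, hα, hY⟩ := h.exists_descent hb
    obtain ⟨L, hL, hprod⟩ := hY.exists_prod_map_Mmat
    refine ⟨α :: L, List.forall_mem_cons.2 ⟨hα, hL⟩, ?_⟩
    rw [List.map_cons, List.prod_cons, hprod, Mmat_mul_fin_two]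
    congr <;> ring
termination_by d.toNat
decreasing_by omega

theorem Admissible.Mmat_mul_ne_one {a b c d : ℤ} (h : Admissible a b c d) (α : ℤ) :
    Mmat α * !![-a, -b; c, d] ≠ 1 := by
  obtain ⟨-, hb0, hbd, -⟩ := h
  rw [Mmat_mul_fin_two]
  intro h1
  have hd : -d = 0 := by simpa using congrFun (congrFun h1 0) 1
  omega

theorem Admissible.eq_of_Mmat_mul_eq {a b c d a' b' c' d' α α' : ℤ} (h : Admissible a b c d)
    (h' : Admissible a' b' c' d')
    (he : Mmat α * !![-a, -b; c, d] = Mmat α' * !![-a', -b'; c', d']) : α = α' := by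
  rw [Mmat_mul_fin_two, Mmat_mul_fin_two] at he
  have hd : d = d' := by simpa using congrFun (congrFun he 0) 1
  have hd' : α * d - b = α' * d' - b' := by simpa using congrFun (congrFun he 1) 1
  subst hd
  obtain ⟨-, hb0, hbd, -⟩ := h
  obtain ⟨-, hb0', hbd', -⟩ := h'
  nlinarith

theorem eq_of_prod_map_Mmat_eq {L₁ L₂ : List ℤ} (hL₁ : ∀ x ∈ L₁, 2 ≤ x)
    (hL₂ : ∀ x ∈ L₂, 2 ≤ x) (h : (L₁.map Mmat).prod = (L₂.map Mmat).prod) : L₁ = L₂ := by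
  induction L₁ generalizing L₂ with
  | nil =>
    cases L₂ with
    | nil => rfl
    | cons α T =>
      obtain ⟨a, b, c, d, hT, hprod⟩ := admissible_prod_map_Mmat (List.forall_mem_cons.1 hL₂).2
      rw [List.map_cons, List.prod_cons, hprod] at h
      exact absurd h.symm (hT.Mmat_mul_ne_one α)
  | cons α T ih =>
    have hT := (List.forall_mem_cons.1 hL₁).2
    obtain ⟨a, b, c, d, hX, hprod⟩ := admissible_prod_map_Mmat hT
    cases L₂ with
    | nil =>
      rw [List.map_cons, List.prod_cons, hprod] at h
      exact absurd h (hX.Mmat_mul_ne_one α)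
    | cons α' T' =>
      have hT' := (List.forall_mem_cons.1 hL₂).2
      obtain ⟨a', b', c', d', hX', hprod'⟩ := admissible_prod_map_Mmat hT'
      simp only [List.map_cons, List.prod_cons] at h
      obtain rfl : α = α' := hX.eq_of_Mmat_mul_eq hX' (by rw [← hprod, ← hprod', h])
      rw [ih hT hT' ((isUnit_Mmat α).mul_left_cancel h)]

theorem stmt8 (a b c d : ℤ)
    (hdet : (!![-a, -b; c, d] : Matrix (Fin 2) (Fin 2) ℤ).det = 1)
    (h0 : 0 ≤ min (min a b) (min c d)) (h1 : max b c < d) :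
    ∃! L : List ℤ, L ≠ [] ∧ (∀ x ∈ L, 2 ≤ x) ∧ (L.map Mmat).prod = !![-a, -b; c, d] := by
  rw [Matrix.det_fin_two_of] at hdet
  simp only [le_min_iff, max_lt_iff] at h0 h1
  have hX : Admissible a b c d := ⟨by linarith, h0.1.2, h1.1, h0.2.1, h1.2⟩
  obtain ⟨L, hL, hprod⟩ := hX.exists_prod_map_Mmat
  refine ⟨L, ⟨?_, hL, hprod⟩, fun L' ⟨_, hL', hprod'⟩ =>
    eq_of_prod_map_Mmat_eq hL' hL (hprod'.trans hprod.symm)⟩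
  rintro rfl
  have ha : (1 : ℤ) = -a := by simpa using congrFun (congrFun hprod 0) 0
  omega
end

section
/- Let N ≥ 3 and let a ∈ {2,…,N−1} be invertible modulo N. Then W(a,N) is the sequence W((−N) mod a, a) followed by the single term 1 + ⌊N/a⌋, where (−N) mod a denotes the representative of −N modulo a lying in {1,…,a−1} (here gcd(a,N)=1 forces (−N) mod a to be invertible modulo a). -/
/-- `IsW a N L` says that `L` is the word `W(a,N)`: a nonempty finite sequence of
integers `≥ 2` whose `M`-product is the matrix `!![-x, -y; a, N]` where
`y ∈ {1,…,N-1}` satisfies `a*y ≡ 1 (mod N)` and `x = (a*y-1)/N`. -/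
def IsW (a N : ℤ) (L : List ℤ) : Prop :=
  L ≠ [] ∧ (∀ x ∈ L, 2 ≤ x) ∧
  ∃ y : ℤ, 1 ≤ y ∧ y ≤ N - 1 ∧ a * y ≡ 1 [ZMOD N] ∧
    (L.map Mmat).prod = !![-((a * y - 1) / N), -y; a, N]

/-! Writing `W((-N) mod a, a) = (α₁, …, α_k)` with product `!![-x', -y'; b, a]`, appending
`c = 1 + ⌊N/a⌋` multiplies by `M(c)` and gives `!![-y', -(c y' - x'); a, c a - b]`. The
identity `c a - b = N` is the division `N = a ⌊N/a⌋ + (a - b)`, and the determinant condition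
`a y - N x = 1` (equivalent to the congruence in the definition of `W`) is inherited since
`det M(c) = 1`. -/

lemma isW_iff {a N : ℤ} {L : List ℤ} :
    IsW a N L ↔ L ≠ [] ∧ (∀ x ∈ L, 2 ≤ x) ∧ ∃ x y : ℤ, 1 ≤ y ∧ y ≤ N - 1 ∧
      a * y - N * x = 1 ∧ (L.map Mmat).prod = !![-x, -y; a, N] := by
  refine and_congr_right fun _ => and_congr_right fun _ => ⟨?_, ?_⟩
  · rintro ⟨y, hy1, hyN, hmod, hprod⟩
    have hdvd : N ∣ a * y - 1 := Int.modEq_iff_dvd.mp hmod.symm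
    refine ⟨(a * y - 1) / N, y, hy1, hyN, ?_, hprod⟩
    rw [Int.mul_ediv_cancel' hdvd]
    ring
  · rintro ⟨x, y, hy1, hyN, hdet, hprod⟩
    have hx : (a * y - 1) / N = x := by
      rw [show a * y - 1 = N * x by linarith]
      exact Int.mul_ediv_cancel_left _ (by omega)
    exact ⟨y, hy1, hyN, Int.modEq_iff_dvd.mpr ⟨-x, by linarith⟩, by rw [hx, hprod]⟩

lemma mul_Mmat (p q r s c : ℤ) :
    !![p, q; r, s] * Mmat c = !![q, c * q - p; s, c * s - r] := by
  ext i j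
  fin_cases i <;> fin_cases j <;> simp [Mmat] <;> ring

lemma mul_one_add_ediv_eq_add_neg_emod {a N : ℤ} (ha : 0 < a) (hdvd : ¬ a ∣ N) :
    a * (1 + N / a) = N + (-N) % a := by
  rw [Int.neg_emod, if_neg hdvd, Int.natAbs_of_nonneg ha.le]
  linarith [Int.mul_ediv_add_emod N a]

theorem stmt13_general (N a : ℤ) (ha : 2 ≤ a) (ha' : a ≤ N - 1)
    (L : List ℤ) (hL : IsW ((-N) % a) a L) :
    IsW a N (L ++ [1 + N / a]) := by
  obtain ⟨hne, hge, x, y, hy1, hya, hdet, hprod⟩ := isW_iff.mp hL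
  have hndvd : ¬ a ∣ N := fun h => by
    rw [Int.emod_eq_zero_of_dvd (dvd_neg.mpr h)] at hdet
    have : a ∣ 1 := ⟨-x, by linarith⟩
    linarith [Int.le_of_dvd one_pos this]
  have hc := mul_one_add_ediv_eq_add_neg_emod (by omega) hndvd
  have hq : 1 ≤ N / a := (Int.le_ediv_iff_mul_le (by omega)).mpr (by omega)
  have hdet' : a * ((1 + N / a) * y - x) - N * y = 1 := by linear_combination y * hc + hdet
  refine isW_iff.mpr ⟨by simp, ?_, y, (1 + N / a) * y - x, ?_, ?_, hdet', ?_⟩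
  · simpa [or_imp, forall_and] using ⟨hge, by omega⟩
  · nlinarith
  · nlinarith
  · rw [List.map_append, List.prod_append, hprod, List.map_singleton, List.prod_singleton,
      mul_Mmat]
    congr <;> linarith

theorem stmt13 (N a : ℤ) (hN : 3 ≤ N) (ha : 2 ≤ a) (ha' : a ≤ N - 1)
    (hcop : IsCoprime a N) (L : List ℤ) (hL : IsW ((-N) % a) a L) :
    IsW a N (L ++ [1 + N / a]) :=
  stmt13_general N a ha ha' L hL
end

section
/- Let N ≥ 3, let a ∈ {2,…,N−1} be invertible modulo N, and let b ∈ {1,…,N−1} satisfy ab ≡ 1 (mod N). Then W(a,N) is the single term 1 + ⌊N/b⌋ followed by the sequence W(c, b), where c ∈ {1,…,b−1} is the inverse of (−N) modulo b. -/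
/-!
With `u = 1 + N / b`, one has `M(u) · [[-x', -y'], [c, b]] = [[-c, -b], [u c - x', u b - y']]`, so it
suffices to identify the entries. Both `y'` and `-N` are inverses of `c` modulo `b`, hence congruent, and
the window `1 ≤ y' < b` forces `u b - y' = N`. Writing `a b - 1 = k N`, the integer `k` is again an
inverse of `-N` modulo `b` and lies in `[0, b)`, so `k = c`; then `u c - x' = a` follows after
multiplying by `b`.
-/

theorem Mmat_mul (u p q r s : ℤ) :
    Mmat u * !![p, q; r, s] = !![-r, -s; p + u * r, q + u * s] := by
  simp [Mmat, add_comm]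

namespace Int

theorem ModEq.eq_of_abs_sub_lt {n a b : ℤ} (h : a ≡ b [ZMOD n]) (hlt : |b - a| < n) : a = b :=
  (sub_eq_zero.1 (eq_zero_of_abs_lt_dvd h.dvd hlt)).symm

theorem modEq_of_mul_modEq_one {n a x y : ℤ} (hx : a * x ≡ 1 [ZMOD n]) (hy : a * y ≡ 1 [ZMOD n]) :
    x ≡ y [ZMOD n] :=
  calc x = x * 1 := (mul_one x).symm
    _ ≡ x * (a * y) [ZMOD n] := hy.symm.mul_left x
    _ = (a * x) * y := by ring
    _ ≡ 1 * y [ZMOD n] := hx.mul_right y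
    _ = y := one_mul y

end Int

theorem mul_eq_mul_add_one_of_modEq {N a b c : ℤ} (ha : 0 < a) (ha' : a ≤ N) (hb : 0 < b)
    (hab : a * b ≡ 1 [ZMOD N]) (hc : 0 ≤ c) (hc' : c < b) (hcinv : -N * c ≡ 1 [ZMOD b]) :
    a * b = c * N + 1 := by
  obtain ⟨k, hk⟩ := hab.symm.dvd
  have hk_inv : -N * k ≡ 1 [ZMOD b] := Int.modEq_iff_dvd.2 ⟨a, by linear_combination -hk⟩
  have hk0 : 0 ≤ k := by nlinarith
  have hkb : k < b := by nlinarith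
  have hkc : k = c := (Int.modEq_of_mul_modEq_one hk_inv hcinv).eq_of_abs_sub_lt
    (abs_sub_lt_iff.2 ⟨by omega, by omega⟩)
  linear_combination hk + N * hkc

theorem eq_succ_ediv_mul_sub_of_modEq {N b c y : ℤ} (hy : 0 < y) (hy' : y < b)
    (hcy : c * y ≡ 1 [ZMOD b]) (hcinv : -N * c ≡ 1 [ZMOD b]) :
    N = (1 + N / b) * b - y := by
  have hb : 0 < b := hy.trans hy'
  have hyN : y ≡ -N [ZMOD b] := Int.modEq_of_mul_modEq_one hcy (by rwa [mul_comm])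
  have hNu : -N ≡ (1 + N / b) * b - N [ZMOD b] :=
    Int.modEq_iff_dvd.2 ⟨1 + N / b, by ring⟩
  have hdiv := Int.emod_add_mul_ediv N b
  have hmod0 := Int.emod_nonneg N hb.ne'
  have hmodb := Int.emod_lt_of_pos N hb
  have hy_eq := (hyN.trans hNu).eq_of_abs_sub_lt (abs_sub_lt_iff.2 ⟨by linarith, by linarith⟩)
  linarith

theorem Mmat_mul_of_eq {N a b c u y : ℤ} (hN : N ≠ 0) (hb : b ≠ 0) (hcy : b ∣ c * y - 1)
    (hab : a * b = c * N + 1) (hu : N = u * b - y) :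
    Mmat u * !![-((c * y - 1) / b), -y; c, b] = !![-((a * b - 1) / N), -b; a, N] := by
  have hx := Int.ediv_mul_cancel hcy
  have hc : (a * b - 1) / N = c := by
    rw [hab, add_sub_cancel_right, Int.mul_ediv_cancel _ hN]
  have ha : -((c * y - 1) / b) + u * c = a :=
    mul_right_cancel₀ hb (by linear_combination -hx - c * hu - hab)
  rw [Mmat_mul, hc, ha, neg_add_eq_sub, ← hu]

theorem stmt14_general (N a b : ℤ) (ha : 2 ≤ a) (ha' : a ≤ N - 1)
    (hb : 1 ≤ b) (hb' : b ≤ N - 1) (hab : a * b ≡ 1 [ZMOD N])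
    (c : ℤ) (hc : 1 ≤ c) (hc' : c ≤ b - 1) (hcinv : (-N) * c ≡ 1 [ZMOD b])
    (L : List ℤ) (hL : IsW c b L) :
    IsW a N ((1 + N / b) :: L) := by
  obtain ⟨-, hL2, y, hy, hy', hcy, hprod⟩ := hL
  have hNb : 1 ≤ N / b := (Int.le_ediv_iff_mul_le (by omega)).2 (by omega)
  refine ⟨List.cons_ne_nil _ _, List.forall_mem_cons.2 ⟨by omega, hL2⟩, b, hb, hb', hab, ?_⟩
  rw [List.map_cons, List.prod_cons, hprod]
  exact Mmat_mul_of_eq (by omega) (by omega) hcy.symm.dvd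
    (mul_eq_mul_add_one_of_modEq (by omega) (by omega) (by omega) hab (by omega) (by omega) hcinv)
    (eq_succ_ediv_mul_sub_of_modEq (by omega) (by omega) hcy hcinv)

theorem stmt14 (N a b : ℤ) (hN : 3 ≤ N) (ha : 2 ≤ a) (ha' : a ≤ N - 1)
    (hb : 1 ≤ b) (hb' : b ≤ N - 1) (hab : a * b ≡ 1 [ZMOD N])
    (c : ℤ) (hc : 1 ≤ c) (hc' : c ≤ b - 1) (hcinv : (-N) * c ≡ 1 [ZMOD b])
    (L : List ℤ) (hL : IsW c b L) :
    IsW a N ((1 + N / b) :: L) :=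
  stmt14_general N a b ha ha' hb hb' hab c hc hc' hcinv L hL
end

section
/- Let N ≥ 2 and let a ∈ {1,…,N−1} be invertible modulo N (so that N−a is also invertible modulo N). Then σ(a,N) = σ(N−a,N). -/
/-! A word `L` with all letters `≥ 2` is determined by the bottom row `(r, s)` of its
`M`-product, which satisfies `0 ≤ r < s`: appending a letter `α` sends `(r, s)` to
`(s, α s - r)`, so the last letter of a word with bottom row `(r, s)` is `⌈s / r⌉`.
If `2a < N`, the last letter of `W(a,N)` is `≥ 3` and lowering it by one gives `W(a,N-a)`,
while `W(N-a,N)` ends in `2` and removing it leaves `W(N-2a,N-a)`. Both moves lower `σ` by one,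
so induction on the length reduces `σ(a,N) = σ(N-a,N)` to `σ(a,N-a) = σ(N-2a,N-a)`.
The case `2a = N` is the uniqueness of the word. -/

def sigma (L : List ℤ) : ℤ := (L.map (· - 1)).sum

lemma sigma_append_singleton (ω : List ℤ) (α : ℤ) : sigma (ω ++ [α]) = sigma ω + (α - 1) := by
  simp [sigma]

lemma prod_map_Mmat_append_singleton_one_zero (ω : List ℤ) (α : ℤ) :
    ((ω ++ [α]).map Mmat).prod 1 0 = (ω.map Mmat).prod 1 1 := by
  simp [Mmat, Matrix.mul_apply, Fin.sum_univ_two]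

lemma prod_map_Mmat_append_singleton_one_one (ω : List ℤ) (α : ℤ) :
    ((ω ++ [α]).map Mmat).prod 1 1 = α * (ω.map Mmat).prod 1 1 - (ω.map Mmat).prod 1 0 := by
  simp [Mmat, Matrix.mul_apply, Fin.sum_univ_two, mul_comm, sub_eq_neg_add]

lemma bottomRow_nonneg_lt (L : List ℤ) (hL : ∀ x ∈ L, 2 ≤ x) :
    0 ≤ (L.map Mmat).prod 1 0 ∧ (L.map Mmat).prod 1 0 < (L.map Mmat).prod 1 1 := by
  induction L using List.reverseRecOn with
  | nil => simp
  | append_singleton ω α ih =>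
    simp only [List.forall_mem_append, List.forall_mem_singleton] at hL
    obtain ⟨hr, hrs⟩ := ih hL.1
    rw [prod_map_Mmat_append_singleton_one_zero, prod_map_Mmat_append_singleton_one_one]
    constructor <;> nlinarith

lemma bottomRow_ne_of_ne_nil {L : List ℤ} (hL : ∀ x ∈ L, 2 ≤ x) (hne : L ≠ []) :
    (L.map Mmat).prod 1 0 ≠ 0 := by
  obtain ⟨ω, α, rfl⟩ := (L.eq_nil_or_concat').resolve_left hne
  have := bottomRow_nonneg_lt ω (List.forall_mem_append.mp hL).1
  rw [prod_map_Mmat_append_singleton_one_zero]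
  omega

lemma eq_of_bottomRow_eq {L L' : List ℤ} (hL : ∀ x ∈ L, 2 ≤ x) (hL' : ∀ x ∈ L', 2 ≤ x)
    (h₀ : (L.map Mmat).prod 1 0 = (L'.map Mmat).prod 1 0)
    (h₁ : (L.map Mmat).prod 1 1 = (L'.map Mmat).prod 1 1) : L = L' := by
  induction L using List.reverseRecOn generalizing L' with
  | nil =>
    by_contra hne
    exact bottomRow_ne_of_ne_nil hL' (Ne.symm hne) (by simpa using h₀.symm)
  | append_singleton ω α ih =>
    obtain rfl | ⟨ω', α', rfl⟩ := L'.eq_nil_or_concat'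
    · exact absurd (by simpa using h₀) (bottomRow_ne_of_ne_nil hL (by simp))
    simp only [List.forall_mem_append, List.forall_mem_singleton] at hL hL'
    have hω := bottomRow_nonneg_lt ω hL.1
    have hω' := bottomRow_nonneg_lt ω' hL'.1
    simp only [prod_map_Mmat_append_singleton_one_zero,
      prod_map_Mmat_append_singleton_one_one] at h₀ h₁
    rw [h₀] at h₁
    have hα : α = α' := by
      rcases lt_trichotomy α α' with h | h | h
      · nlinarith
      · exact h
      · nlinarith
    subst hα
    rw [ih hL.1 hL'.1 (by linarith) h₀]

lemma exists_eq_append_of_two_mul_lt {L : List ℤ} {a N : ℤ} (hL : ∀ x ∈ L, 2 ≤ x) (ha : 0 < a)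
    (haN : 2 * a < N) (h₀ : (L.map Mmat).prod 1 0 = a) (h₁ : (L.map Mmat).prod 1 1 = N) :
    ∃ (ω : List ℤ) (α : ℤ), L = ω ++ [α] ∧ (∀ x ∈ ω ++ [α - 1], 2 ≤ x) ∧
      ((ω ++ [α - 1]).map Mmat).prod 1 0 = a ∧ ((ω ++ [α - 1]).map Mmat).prod 1 1 = N - a := by
  obtain rfl | ⟨ω, α, rfl⟩ := L.eq_nil_or_concat'
  · rw [List.map_nil, List.prod_nil, Matrix.one_apply_ne (by decide)] at h₀
    omega
  simp only [List.forall_mem_append, List.forall_mem_singleton] at hL ⊢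
  have hω := bottomRow_nonneg_lt ω hL.1
  simp only [prod_map_Mmat_append_singleton_one_zero,
    prod_map_Mmat_append_singleton_one_one] at h₀ h₁ ⊢
  have hα : 3 ≤ α := by
    by_contra! h
    nlinarith
  exact ⟨ω, α, rfl, ⟨hL.1, by omega⟩, h₀, by rw [← h₀, ← h₁]; ring⟩

lemma exists_eq_append_two_of_two_mul_lt {L : List ℤ} {a N : ℤ} (hL : ∀ x ∈ L, 2 ≤ x)
    (haN : 2 * a < N) (h₀ : (L.map Mmat).prod 1 0 = N - a) (h₁ : (L.map Mmat).prod 1 1 = N) :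
    ∃ T : List ℤ, L = T ++ [2] ∧ (T.map Mmat).prod 1 0 = N - 2 * a ∧
      (T.map Mmat).prod 1 1 = N - a := by
  obtain rfl | ⟨T, β, rfl⟩ := L.eq_nil_or_concat'
  · rw [List.map_nil, List.prod_nil, Matrix.one_apply_ne (by decide)] at h₀
    rw [List.map_nil, List.prod_nil, Matrix.one_apply_eq] at h₁
    omega
  simp only [List.forall_mem_append, List.forall_mem_singleton] at hL
  have hT := bottomRow_nonneg_lt T hL.1
  simp only [prod_map_Mmat_append_singleton_one_zero,
    prod_map_Mmat_append_singleton_one_one] at h₀ h₁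
  obtain rfl : β = 2 := by
    by_contra! h
    nlinarith [lt_of_le_of_ne hL.2 h.symm]
  exact ⟨T, rfl, by linarith, h₀⟩

theorem sigma_eq_of_bottomRow {L L' : List ℤ} {a N : ℤ} (hL : ∀ x ∈ L, 2 ≤ x)
    (hL' : ∀ x ∈ L', 2 ≤ x) (h₀ : (L.map Mmat).prod 1 0 = a) (h₁ : (L.map Mmat).prod 1 1 = N)
    (h₀' : (L'.map Mmat).prod 1 0 = N - a) (h₁' : (L'.map Mmat).prod 1 1 = N) :
    sigma L = sigma L' := by
  induction hn : L.length + L'.length using Nat.strong_induction_on generalizing L L' a N with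
  | _ n ih =>
  wlog haN : 2 * a ≤ N generalizing L L' a
  · exact (this hL' hL h₀' h₁' (by rw [h₀]; ring) h₁ (by omega) (by omega)).symm
  rcases haN.lt_or_eq with hlt | heq
  · have ha : 0 < a := by have := bottomRow_nonneg_lt L' hL'; omega
    obtain ⟨ω, α, rfl, hω, hω₀, hω₁⟩ := exists_eq_append_of_two_mul_lt hL ha hlt h₀ h₁
    obtain ⟨T, rfl, hT₀, hT₁⟩ := exists_eq_append_two_of_two_mul_lt hL' hlt h₀' h₁'
    have hT : ∀ x ∈ T, 2 ≤ x := (List.forall_mem_append.mp hL').1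
    have := ih _ (by simp only [List.length_append, List.length_singleton] at hn ⊢; omega)
      hω hT hω₀ hω₁ (by rw [hT₀]; ring) hT₁ rfl
    simp only [sigma_append_singleton] at this ⊢
    linarith
  · rw [eq_of_bottomRow_eq hL hL' (by omega) (by omega)]

theorem stmt18_general (N a : ℤ)
    (L L' : List ℤ) (hL : IsW a N L) (hL' : IsW (N - a) N L') :
    (L.map (fun x => x - 1)).sum = (L'.map (fun x => x - 1)).sum := by
  obtain ⟨-, hL2, _, -, -, -, hprod⟩ := hL
  obtain ⟨-, hL2', _, -, -, -, hprod'⟩ := hL'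
  exact sigma_eq_of_bottomRow (a := a) (N := N) hL2 hL2' (by simp [hprod]) (by simp [hprod])
    (by simp [hprod']) (by simp [hprod'])

theorem stmt18 (N a : ℤ) (hN : 2 ≤ N) (ha : 1 ≤ a) (ha' : a ≤ N - 1)
    (hcop : IsCoprime a N)
    (L L' : List ℤ) (hL : IsW a N L) (hL' : IsW (N - a) N L') :
    (L.map (fun x => x - 1)).sum = (L'.map (fun x => x - 1)).sum :=
  stmt18_general N a L L' hL hL'
end

section
/- Let N ≥ 2 and let a ∈ {1,…,N−1} be invertible modulo N, and let [γ₁,γ₂,…,γ_m] be the continued fraction expansion of the rational number a/N ∈ (0,1) (defined recursively by x = 1/(γ₁ + [γ₂,…]) with γ₁ = ⌊1/x⌋). Then 1 + σ(a,N) = γ₁ + γ₂ + ⋯ + γ_m. -/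
/-- `IsCF x G` says that `G` is the continued fraction expansion of `x ∈ [0,1)`,
defined recursively by `x = 1/(γ₁ + [γ₂,…])` with `γ₁ = ⌊1/x⌋`, the empty
expansion corresponding to `x = 0`. -/
def IsCF : ℚ → List ℤ → Prop
  | x, [] => x = 0
  | x, g :: t => 0 < x ∧ g = ⌊x⁻¹⌋ ∧ IsCF (x⁻¹ - g) t

/-! Right multiplication by `M(α)` sends the bottom row `(c, d)` of a product to `(d, αd - c)`,
and `d / (αd - c) = 1 / ((α - 1) + (1 - c/d))`: the expansion of the new ratio is `α - 1` followed
by the expansion of `1 - c/d`. Continued fraction sums are invariant under `x ↦ 1 - x` (for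
`x < 1/2`, `[γ, t]` turns into `[1, γ - 1, t]`), so induction on the word adds `α - 1` per letter;
the extra `1` comes from the first letter, whose ratio `1/α` has expansion `[α]`. -/

namespace IsCF

theorem unique : ∀ {x : ℚ} {G G' : List ℤ}, IsCF x G → IsCF x G' → G = G'
  | _, [], [], _, _ => rfl
  | _, [], _ :: _, h, h' => (h'.1.ne' h).elim
  | _, _ :: _, [], h, h' => (h.1.ne' h').elim
  | _, _ :: _, _ :: _, ⟨_, hg, ht⟩, ⟨_, hg', ht'⟩ => by
    obtain rfl := hg.trans hg'.symm
    rw [unique ht ht']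

theorem eq_singleton_of_inv_intCast {α : ℤ} (hα : α ≠ 0) {G : List ℤ} (h : IsCF (α : ℚ)⁻¹ G) :
    G = [α] := by
  cases G with
  | nil => exact absurd (inv_eq_zero.1 h) (by exact_mod_cast hα)
  | cons g t =>
    obtain ⟨-, hg, ht⟩ := h
    rw [inv_inv, Int.floor_intCast] at hg
    subst hg
    rw [inv_inv, sub_self] at ht
    rw [unique ht (show IsCF 0 [] from rfl)]

theorem exists_eq_cons_of_inv_sub {α : ℤ} {r : ℚ} (hr0 : 0 < r) (hr1 : r < 1) {G : List ℤ}
    (h : IsCF (α - r)⁻¹ G) : ∃ t, G = (α - 1) :: t ∧ IsCF (1 - r) t := by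
  cases G with
  | nil =>
    have hαr : (α : ℚ) = r := sub_eq_zero.1 (inv_eq_zero.1 h)
    have : (0 : ℤ) < α ∧ α < 1 := ⟨by exact_mod_cast hαr ▸ hr0, by exact_mod_cast hαr ▸ hr1⟩
    omega
  | cons g t =>
    obtain ⟨-, hg, ht⟩ := h
    rw [inv_inv] at hg ht
    obtain rfl : g = α - 1 := by
      rw [hg, Int.floor_eq_iff]
      push_cast
      constructor <;> linarith
    refine ⟨t, rfl, ?_⟩
    convert ht using 1
    push_cast
    ring

theorem one_sub_of_lt_half {x : ℚ} {γ : ℤ} {t : List ℤ} (h : IsCF x (γ :: t)) (hx : x < 1 / 2) :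
    IsCF (1 - x) (1 :: (γ - 1) :: t) := by
  obtain ⟨hx0, hγ, ht⟩ := h
  have hlt : 1 < (1 - x)⁻¹ := (one_lt_inv₀ (by linarith)).2 (by linarith)
  have hlt' : (1 - x)⁻¹ < 2 := by rw [inv_lt_comm₀ (by linarith) (by norm_num)]; linarith
  have hkey : ((1 - x)⁻¹ - 1)⁻¹ = x⁻¹ - 1 := by
    have : 1 - x ≠ 0 := by linarith
    field_simp [hx0.ne']
    ring
  simp only [IsCF, Int.cast_one, hkey]
  refine ⟨by linarith, ?_, by linarith, ?_, ?_⟩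
  · rw [eq_comm, Int.floor_eq_iff, Int.cast_one]
    constructor <;> linarith
  · rw [hγ, Int.floor_sub_one]
  · convert ht using 1
    push_cast
    ring

theorem sum_eq_of_one_sub {x : ℚ} {G G' : List ℤ} (h : IsCF x G) (h' : IsCF (1 - x) G')
    (hx0 : 0 < x) (hx1 : x < 1) : G.sum = G'.sum := by
  suffices key : ∀ {x : ℚ} {G G' : List ℤ}, 0 < x → x < 1 / 2 → IsCF x G → IsCF (1 - x) G' →
      G.sum = G'.sum by
    rcases lt_trichotomy x (1 / 2) with hlt | rfl | hgt
    · exact key hx0 hlt h h'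
    · rw [unique h (by rwa [show (1 : ℚ) - 1 / 2 = 1 / 2 by norm_num] at h')]
    · exact (key (by linarith) (by linarith) h' (by rwa [sub_sub_cancel])).symm
  intro x G G' hx0 hx h h'
  cases G with
  | nil => exact absurd h hx0.ne'
  | cons γ t =>
    rw [unique h' (h.one_sub_of_lt_half hx)]
    simp only [List.sum_cons]
    ring

end IsCF

theorem exists_isCF_intCast_div (p q : ℤ) (hp : 0 ≤ p) (hpq : p < q) : ∃ G, IsCF (p / q) G := by
  rcases hp.eq_or_lt with rfl | hp0
  · exact ⟨[], by simp [IsCF]⟩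
  · have hlt := Int.emod_lt_of_pos q hp0
    obtain ⟨t, ht⟩ := exists_isCF_intCast_div (q % p) p (Int.emod_nonneg _ hp0.ne') hlt
    have hp0' : (0 : ℚ) < p := by exact_mod_cast hp0
    have hq0 : (0 : ℚ) < q := by exact_mod_cast hp0.trans hpq
    lift p to ℕ using hp
    have hinv : ((p : ℤ) / q : ℚ)⁻¹ = q / (p : ℕ) := by rw [inv_div, Int.cast_natCast]
    refine ⟨⌊(q : ℚ) / (p : ℕ)⌋ :: t, by positivity, by rw [hinv], ?_⟩
    rw [hinv, ← Int.fract, Int.fract_div_intCast_eq_div_intCast_mod]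
    simpa using ht
termination_by p.toNat
decreasing_by omega

theorem mul_Mmat_apply_one_zero (P : Matrix (Fin 2) (Fin 2) ℤ) (α : ℤ) :
    (P * Mmat α) 1 0 = P 1 1 := by
  simp [Mmat, Matrix.mul_apply, Fin.sum_univ_two]

theorem mul_Mmat_apply_one_one (P : Matrix (Fin 2) (Fin 2) ℤ) (α : ℤ) :
    (P * Mmat α) 1 1 = α * P 1 1 - P 1 0 := by
  simp only [Mmat, Matrix.mul_apply, Fin.sum_univ_two, Matrix.of_apply, Matrix.cons_val',
    Matrix.cons_val_zero, Matrix.cons_val_one, Matrix.cons_val_fin_one]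
  ring

theorem prod_map_Mmat_concat (L : List ℤ) (α : ℤ) :
    ((L ++ [α]).map Mmat).prod = (L.map Mmat).prod * Mmat α := by
  simp

theorem prod_map_Mmat_concat_one_zero_pos_lt (L : List ℤ) (α : ℤ) (h : ∀ β ∈ L ++ [α], 2 ≤ β) :
    0 < ((L ++ [α]).map Mmat).prod 1 0 ∧
      ((L ++ [α]).map Mmat).prod 1 0 < ((L ++ [α]).map Mmat).prod 1 1 := by
  induction L using List.reverseRecOn generalizing α with
  | nil =>
    simpa [Mmat, Int.lt_iff_add_one_le] using h α (by simp)
  | append_singleton L β ih =>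
    obtain ⟨hc, hcd⟩ := ih β fun γ hγ => h γ (List.mem_append_left _ hγ)
    have hα := h α (by simp)
    rw [prod_map_Mmat_concat, mul_Mmat_apply_one_zero, mul_Mmat_apply_one_one]
    constructor <;> nlinarith

theorem one_add_sum_sub_one_eq_sum_of_isCF (L : List ℤ) (α : ℤ) (h : ∀ β ∈ L ++ [α], 2 ≤ β)
    (G : List ℤ)
    (hG : IsCF (((L ++ [α]).map Mmat).prod 1 0 / ((L ++ [α]).map Mmat).prod 1 1) G) :
    1 + ((L ++ [α]).map (· - 1)).sum = G.sum := by
  induction L using List.reverseRecOn generalizing α G with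
  | nil =>
    simp only [List.nil_append, List.map_singleton, List.prod_singleton, Mmat, Matrix.of_apply,
      Matrix.cons_val', Matrix.cons_val_zero, Matrix.cons_val_one, Matrix.cons_val_fin_one,
      Int.cast_one, one_div] at hG
    rw [IsCF.eq_singleton_of_inv_intCast (by have := h α (by simp); omega) hG]
    simp
  | append_singleton L β ih =>
    set c := ((L ++ [β]).map Mmat).prod 1 0
    set d := ((L ++ [β]).map Mmat).prod 1 1
    obtain ⟨hc, hcd⟩ :=
      prod_map_Mmat_concat_one_zero_pos_lt L β fun γ hγ => h γ (List.mem_append_left _ hγ)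
    have hd : (0 : ℚ) < d := by exact_mod_cast hc.trans hcd
    have hx : (d : ℚ) / ((α * d - c : ℤ) : ℚ) = ((α : ℚ) - c / d)⁻¹ := by
      push_cast
      field_simp
    rw [prod_map_Mmat_concat, mul_Mmat_apply_one_zero, mul_Mmat_apply_one_one, hx] at hG
    have hr0 : (0 : ℚ) < c / d := by positivity
    have hr1 : (c : ℚ) / d < 1 := by rw [div_lt_one hd]; exact_mod_cast hcd
    obtain ⟨t, rfl, ht⟩ := IsCF.exists_eq_cons_of_inv_sub hr0 hr1 hG
    obtain ⟨G', hG'⟩ := exists_isCF_intCast_div c d hc.le hcd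
    have hsum := ih β (fun γ hγ => h γ (List.mem_append_left _ hγ)) G' hG'
    rw [IsCF.sum_eq_of_one_sub hG' ht hr0 hr1] at hsum
    simp only [List.map_append, List.sum_append, List.map_cons, List.map_nil, List.sum_cons,
      List.sum_nil] at hsum ⊢
    linarith

theorem stmt19_general (N a : ℤ) (L : List ℤ) (hL : IsW a N L)
    (G : List ℤ) (hG : IsCF ((a : ℚ) / (N : ℚ)) G) :
    1 + (L.map (fun x => x - 1)).sum = G.sum := by
  obtain ⟨hne, h2, y, -, -, -, hprod⟩ := hL
  obtain ⟨L, α, rfl⟩ : ∃ L' α, L = L' ++ [α] := ⟨_, _, (List.dropLast_append_getLast hne).symm⟩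
  have ha : ((L ++ [α]).map Mmat).prod 1 0 = a := by rw [hprod]; rfl
  have hN : ((L ++ [α]).map Mmat).prod 1 1 = N := by rw [hprod]; rfl
  rw [← ha, ← hN] at hG
  exact one_add_sum_sub_one_eq_sum_of_isCF L α h2 G hG

theorem stmt19 (N a : ℤ) (hN : 2 ≤ N) (ha : 1 ≤ a) (ha' : a ≤ N - 1)
    (hcop : IsCoprime a N) (L : List ℤ) (hL : IsW a N L)
    (G : List ℤ) (hG : IsCF ((a : ℚ) / (N : ℚ)) G) :
    1 + (L.map (fun x => x - 1)).sum = G.sum :=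
  stmt19_general N a L hL G hG
end
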